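/- arXiv:cs/0211012 — 7 statements merged into one kernel-verified Lean document; each statement's English description precedes it below -/
import Mathlib

section
/- Fix k ≥ 3. Let F be a finite family of k-ary constraints over a variable type V such that every constraint in F has no implicates of length at most 2 (is 2-extendable). If F is minimally unsatisfiable, then there exists a nonempty subfamily G ⊆ F with (2k−3)·|G| ≥ 2·|Var(G)| (equivalently, c*(F) := max over nonempty G ⊆ F of |G|/|Var(G)| is at least 2/(2k−3)). -/
/-- A `k`-ary boolean constraint over variables `V`: a scope of `k` variables and a
satisfaction predicate depending only on the restriction of an assignment to the scope. -/
structure Constraint (V : Type*) (k : ℕ) where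
  scope : Finset V
  card_scope : scope.card = k
  sat : (V → Bool) → Prop
  isLocal : ∀ σ τ : V → Bool, (∀ v ∈ scope, σ v = τ v) → (sat σ ↔ sat τ)

/-- A constraint has no implicates of length at most 2 (is 2-extendable): for every
subset `T` of the scope with `|T| ≤ 2` and every assignment `σ` there is an assignment
agreeing with `σ` on `T` that satisfies the constraint. -/
def TwoExtendable {V : Type*} {k : ℕ} (c : Constraint V k) : Prop :=
  ∀ T ⊆ c.scope, T.card ≤ 2 → ∀ σ : V → Bool,
    ∃ τ : V → Bool, (∀ v ∈ T, τ v = σ v) ∧ c.sat τ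

theorem stmt1 {V ι : Type*} [DecidableEq V] (k : ℕ) (hk : 3 ≤ k)
    (F : Finset ι) (con : ι → Constraint V k)
    (hext : ∀ i ∈ F, TwoExtendable (con i))
    (hunsat : ¬ ∃ σ : V → Bool, ∀ i ∈ F, (con i).sat σ)
    (hmin : ∀ G ⊂ F, ∃ σ : V → Bool, ∀ i ∈ G, (con i).sat σ) :
    ∃ G ⊆ F, G.Nonempty ∧
      2 * (G.biUnion fun i => (con i).scope).card ≤ (2 * k - 3) * G.card := by
  classical
  by_contra hcon
  push_neg at hcon
  apply hunsat
  suffices h : ∀ G : Finset ι, G ⊆ F → ∃ σ : V → Bool, ∀ i ∈ G, (con i).sat σ by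
    exact h F le_rfl
  intro G
  induction G using Finset.strongInduction with
  | _ G ih =>
    intro hGF
    rcases G.eq_empty_or_nonempty with rfl | hne
    · exact ⟨fun _ => true, fun i hi => absurd hi (Finset.notMem_empty i)⟩
    -- key counting step: some constraint in G has at most 2 variables shared with the rest
    have key : ∃ i ∈ G, k - 2 ≤ ((con i).scope \
        ((G.erase i).biUnion fun j => (con j).scope)).card := by
      have hlt := hcon G hGF hne
      set S := G.biUnion (fun j => (con j).scope) with hS
      set Priv : ι → Finset V :=
        fun i => (con i).scope \ ((G.erase i).biUnion fun j => (con j).scope) with hPriv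
      set B := G.biUnion Priv with hB
      set deg : V → ℕ := fun v => (G.filter fun i => v ∈ (con i).scope).card with hdeg
      have hdeg1 : ∀ v ∈ S, 1 ≤ deg v := by
        intro v hv
        obtain ⟨i, hiG, hvi⟩ := Finset.mem_biUnion.mp hv
        have : i ∈ G.filter fun i => v ∈ (con i).scope := Finset.mem_filter.mpr ⟨hiG, hvi⟩
        exact Finset.card_pos.mpr ⟨i, this⟩
      have hdeg2 : ∀ v ∈ S, v ∉ B → 2 ≤ deg v := by
        intro v hv hvB
        obtain ⟨i, hiG, hvi⟩ := Finset.mem_biUnion.mp hv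
        have hnp : v ∉ Priv i := fun hp => hvB (Finset.mem_biUnion.mpr ⟨i, hiG, hp⟩)
        have : v ∈ (G.erase i).biUnion fun j => (con j).scope := by
          by_contra hcontra
          exact hnp (Finset.mem_sdiff.mpr ⟨hvi, hcontra⟩)
        obtain ⟨j, hjE, hvj⟩ := Finset.mem_biUnion.mp this
        have hji : j ≠ i := (Finset.mem_erase.mp hjE).1
        have hjG : j ∈ G := (Finset.mem_erase.mp hjE).2
        refine Finset.one_lt_card.mpr ⟨i, Finset.mem_filter.mpr ⟨hiG, hvi⟩,
          j, Finset.mem_filter.mpr ⟨hjG, hvj⟩, fun h => hji h.symm⟩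
      have hBS : B ⊆ S := by
        refine Finset.biUnion_subset.mpr fun i hi => fun v hv => ?_
        exact Finset.mem_biUnion.mpr ⟨i, hi, (Finset.mem_sdiff.mp hv).1⟩
      -- double counting: sum of degrees = k * |G|
      have hsum : ∑ v ∈ S, deg v = k * G.card := by
        have step1 : ∀ v, deg v = ∑ i ∈ G, if v ∈ (con i).scope then 1 else 0 := by
          intro v; rw [hdeg]; exact Finset.card_filter _ _
        calc ∑ v ∈ S, deg v = ∑ v ∈ S, ∑ i ∈ G, if v ∈ (con i).scope then 1 else 0 := by
              exact Finset.sum_congr rfl fun v _ => step1 v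
          _ = ∑ i ∈ G, ∑ v ∈ S, if v ∈ (con i).scope then 1 else 0 := Finset.sum_comm
          _ = ∑ i ∈ G, k := by
              refine Finset.sum_congr rfl fun i hi => ?_
              rw [Finset.sum_ite_mem, Finset.sum_const, smul_eq_mul, mul_one,
                Finset.inter_eq_right.mpr (Finset.subset_biUnion_of_mem _ hi),
                (con i).card_scope]
          _ = k * G.card := by rw [Finset.sum_const, smul_eq_mul, mul_comm]
      -- lower bound: 2|S| ≤ sum of degrees + |B|
      have h2 : 2 * S.card ≤ k * G.card + B.card := by
        have hpt : ∑ v ∈ S, 2 ≤ ∑ v ∈ S, (deg v + if v ∈ B then 1 else 0) := by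
          refine Finset.sum_le_sum fun v hv => ?_
          by_cases hvB : v ∈ B
          · simp only [hvB, if_true]
            have := hdeg1 v hv; omega
          · simp only [hvB, if_false]
            have := hdeg2 v hv hvB; omega
        rw [Finset.sum_const, smul_eq_mul, Finset.sum_add_distrib] at hpt
        have hBcard : (∑ v ∈ S, if v ∈ B then 1 else 0) = B.card := by
          rw [Finset.sum_ite_mem, Finset.inter_eq_right.mpr hBS, Finset.sum_const,
            smul_eq_mul, mul_one]
        rw [hBcard, hsum] at hpt
        omega
      have h3 : B.card ≤ ∑ i ∈ G, (Priv i).card := Finset.card_biUnion_le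
      by_contra hno
      push_neg at hno
      have h4 : ∑ i ∈ G, (Priv i).card ≤ (k - 3) * G.card := by
        calc ∑ i ∈ G, (Priv i).card ≤ ∑ _i ∈ G, (k - 3) := by
              refine Finset.sum_le_sum fun i hi => ?_
              have h5 := hno i hi
              simp only [hPriv]
              omega
          _ = (k - 3) * G.card := by rw [Finset.sum_const, smul_eq_mul, mul_comm]
      have e1 : k * G.card + (k - 3) * G.card = (2 * k - 3) * G.card := by
        have h : k + (k - 3) = 2 * k - 3 := by omega
        rw [← Nat.add_mul, h]
      have hfinal : (2 * k - 3) * G.card + 1 ≤ (2 * k - 3) * G.card :=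
        calc (2 * k - 3) * G.card + 1 ≤ 2 * S.card := hlt
          _ ≤ k * G.card + B.card := h2
          _ ≤ k * G.card + ∑ i ∈ G, (Priv i).card := Nat.add_le_add_left h3 _
          _ ≤ k * G.card + (k - 3) * G.card := Nat.add_le_add_left h4 _
          _ = (2 * k - 3) * G.card := e1
      omega
    obtain ⟨i, hiG, hpriv⟩ := key
    set W := (G.erase i).biUnion (fun j => (con j).scope) with hW
    have hT : ((con i).scope ∩ W).card ≤ 2 := by
      have hsplit : ((con i).scope \ W).card + ((con i).scope ∩ W).card
          = (con i).scope.card := Finset.card_sdiff_add_card_inter _ _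
      rw [(con i).card_scope] at hsplit
      omega
    obtain ⟨σ, hσ⟩ := ih (G.erase i) (Finset.erase_ssubset hiG)
      ((Finset.erase_subset _ _).trans hGF)
    obtain ⟨τ, hτagree, hτsat⟩ := hext i (hGF hiG) ((con i).scope ∩ W)
      Finset.inter_subset_left hT σ
    refine ⟨fun v => if v ∈ W then σ v else τ v, ?_⟩
    intro j hj
    rcases eq_or_ne j i with rfl | hji
    · refine ((con j).isLocal _ τ ?_).mpr hτsat
      intro v hv
      by_cases hvW : v ∈ W
      · simp only [hvW, if_true]
        exact (hτagree v (Finset.mem_inter.mpr ⟨hv, hvW⟩)).symm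
      · simp only [hvW, if_false]
    · refine ((con j).isLocal _ σ ?_).mpr (hσ j (Finset.mem_erase.mpr ⟨hji, hj⟩))
      intro v hv
      have hvW : v ∈ W := Finset.mem_biUnion.mpr ⟨j, Finset.mem_erase.mpr ⟨hji, hj⟩, hv⟩
      simp only [hvW, if_true]
end

section
/- Fix k ≥ 3. Let F be a finite k-uniform hypergraph (a finite index set F with a map e assigning to each i ∈ F a set e(i) of vertices with |e(i)| = k) such that every nonempty subfamily G ⊆ F satisfies 2·|V(G)| > (2k−3)·|G|, where V(G) = ⋃_{i∈G} e(i). Then there is an enumeration C₁, …, C_m of the members of F such that for every i, the edge e(C_i) contains at least k−2 vertices that appear in none of e(C₁), …, e(C_{i−1}). -/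
/-!
Counting incidences, every vertex of `V(G)` is covered at least twice by the edges of `G` and
their private parts `e i \ V(G - i)`, so
`2 |V(G)| ≤ ∑ᵢ (k + #private(i))`. If every private part had at most `k - 3` vertices this would
give `2 |V(G)| ≤ (2k - 3) |G|`; hence every nonempty subfamily has an edge with `k - 2` private
vertices. Removing such an edge from `F` and enumerating the rest recursively, it comes last,
and its private vertices are new with respect to all earlier edges.
-/

open Finset

theorem Finset.sum_card_eq_sum_card_filter_mem {ι α : Type*} [DecidableEq α] {s : Finset ι}
    {t : Finset α} {f : ι → Finset α} (h : ∀ i ∈ s, f i ⊆ t) :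
    ∑ i ∈ s, #(f i) = ∑ a ∈ t, #{i ∈ s | a ∈ f i} := by
  simp_rw [card_filter]
  rw [sum_comm]
  refine sum_congr rfl fun i hi => ?_
  rw [sum_boole, filter_mem_eq_inter, inter_eq_right.mpr (h i hi), Nat.cast_id]

section Hypergraph

variable {ι W : Type*} [DecidableEq ι] [DecidableEq W]

theorem two_le_card_filter_mem_add_card_filter_mem_sdiff {G : Finset ι} {e : ι → Finset W}
    {v : W} (hv : v ∈ G.biUnion e) :
    2 ≤ #{i ∈ G | v ∈ e i} + #{i ∈ G | v ∈ e i \ (G.erase i).biUnion e} := by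
  obtain ⟨i, hi, hvi⟩ := mem_biUnion.mp hv
  by_cases hshared : v ∈ (G.erase i).biUnion e
  · obtain ⟨j, hj, hvj⟩ := mem_biUnion.mp hshared
    have hpair : {i, j} ⊆ {i ∈ G | v ∈ e i} := by
      simp [insert_subset_iff, hi, hvi, mem_of_mem_erase hj, hvj]
    have := card_le_card hpair
    rw [card_pair (ne_of_mem_erase hj).symm] at this
    omega
  · have hmem : i ∈ {i ∈ G | v ∈ e i \ (G.erase i).biUnion e} := by simp [hi, hvi, hshared]
    have h1 := card_pos.mpr ⟨i, hmem⟩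
    have h2 := card_pos.mpr ⟨i, (by simp [hi, hvi] : i ∈ {i ∈ G | v ∈ e i})⟩
    omega

theorem two_mul_card_biUnion_le_sum_card_add_card_sdiff (G : Finset ι) (e : ι → Finset W) :
    2 * #(G.biUnion e) ≤ ∑ i ∈ G, (#(e i) + #(e i \ (G.erase i).biUnion e)) := by
  have hsub : ∀ i ∈ G, e i ⊆ G.biUnion e := fun i hi => subset_biUnion_of_mem e hi
  calc 2 * #(G.biUnion e) = ∑ _v ∈ G.biUnion e, 2 := by rw [sum_const, smul_eq_mul, mul_comm]
    _ ≤ ∑ v ∈ G.biUnion e, (#{i ∈ G | v ∈ e i} + #{i ∈ G | v ∈ e i \ (G.erase i).biUnion e}) :=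
      sum_le_sum fun v hv => two_le_card_filter_mem_add_card_filter_mem_sdiff hv
    _ = ∑ i ∈ G, (#(e i) + #(e i \ (G.erase i).biUnion e)) := by
      rw [sum_add_distrib, sum_add_distrib, sum_card_eq_sum_card_filter_mem hsub,
        sum_card_eq_sum_card_filter_mem fun i hi => sdiff_subset.trans (hsub i hi)]

theorem exists_le_card_sdiff_biUnion_erase {k : ℕ} {G : Finset ι} {e : ι → Finset W}
    (hcard : ∀ i ∈ G, #(e i) = k)
    (hsparse : (2 * k - 3) * #G < 2 * #(G.biUnion e)) :
    ∃ i ∈ G, k - 2 ≤ #(e i \ (G.erase i).biUnion e) := by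
  by_contra! hfew
  have hedge : ∀ i ∈ G, #(e i) + #(e i \ (G.erase i).biUnion e) ≤ 2 * k - 3 := fun i hi => by
    have := hfew i hi
    rw [hcard i hi]
    omega
  have := (two_mul_card_biUnion_le_sum_card_add_card_sdiff G e).trans
    ((sum_le_sum hedge).trans_eq (by rw [sum_const, smul_eq_mul, mul_comm]))
  omega

end Hypergraph

theorem exists_enumeration_of_forall_exists_erase {ι : Type*} [DecidableEq ι]
    (P : Finset ι → ι → Prop) (hP : ∀ ⦃S T i⦄, S ⊆ T → P T i → P S i) (F : Finset ι)
    (hF : ∀ G ⊆ F, G.Nonempty → ∃ i ∈ G, P (G.erase i) i) :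
    ∃ C : Fin #F → ι, Function.Injective C ∧ (∀ i, C i ∈ F) ∧
      ∀ i, P (({j | j < i} : Finset _).image C) (C i) := by
  induction hn : #F generalizing F with
  | zero => exact ⟨Fin.elim0, fun a => a.elim0, fun i => i.elim0, fun i => i.elim0⟩
  | succ n ih =>
    obtain ⟨a, ha, hPa⟩ := hF F subset_rfl (card_pos.mp (by omega))
    obtain ⟨C, hinj, hmem, hC⟩ := ih (F.erase a)
      (fun G hG hne => hF G (hG.trans (erase_subset a F)) hne)
      (by rw [card_erase_of_mem ha, hn]; rfl)
    refine ⟨Fin.snoc C a, Fin.snoc_injective_of_injective hinj ?_, ?_, ?_⟩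
    · rintro ⟨j, hj⟩
      exact ne_of_mem_erase (hmem j) hj
    · intro i
      induction i using Fin.lastCases with
      | last => simpa using ha
      | cast j => simpa using mem_of_mem_erase (hmem j)
    · intro i
      induction i using Fin.lastCases with
      | last =>
        refine hP (fun x hx => ?_) (by simpa using hPa)
        obtain ⟨i, hi, rfl⟩ := mem_image.mp hx
        obtain ⟨j, rfl⟩ := Fin.exists_castSucc_eq.mpr (mem_filter.mp hi).2.ne
        simpa using hmem j
      | cast j =>
        refine hP (fun x hx => ?_) (by simpa using hC j)
        obtain ⟨i, hi, rfl⟩ := mem_image.mp hx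
        obtain ⟨i, rfl⟩ := Fin.exists_castSucc_eq.mpr
          ((mem_filter.mp hi).2.trans (Fin.castSucc_lt_last j)).ne
        exact mem_image.mpr ⟨i, by simpa using hi, by simp⟩

theorem stmt2_general {ι W : Type*} [DecidableEq ι] [DecidableEq W] (k : ℕ)
    (F : Finset ι) (e : ι → Finset W) (hcard : ∀ i ∈ F, (e i).card = k)
    (hsparse : ∀ G ⊆ F, G.Nonempty → (2 * k - 3) * G.card < 2 * (G.biUnion e).card) :
    ∃ C : Fin F.card → ι, Function.Injective C ∧ (∀ i, C i ∈ F) ∧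
      ∀ i : Fin F.card,
        k - 2 ≤ ((e (C i)).filter fun v => ∀ j : Fin F.card, j < i → v ∉ e (C j)).card := by
  obtain ⟨C, hinj, hmem, hnew⟩ := exists_enumeration_of_forall_exists_erase
    (fun S i => k - 2 ≤ #(e i \ S.biUnion e))
    (fun S T i hST h => h.trans (card_le_card (sdiff_subset_sdiff subset_rfl
      (biUnion_subset_biUnion_of_subset_left e hST))))
    F (fun G hG hne => exists_le_card_sdiff_biUnion_erase (fun i hi => hcard i (hG hi))
      (hsparse G hG hne))
  refine ⟨C, hinj, hmem, fun i => (hnew i).trans_eq (congrArg card ?_)⟩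
  ext v
  simp

theorem stmt2 {ι W : Type*} [DecidableEq ι] [DecidableEq W] (k : ℕ) (hk : 3 ≤ k)
    (F : Finset ι) (e : ι → Finset W) (hcard : ∀ i ∈ F, (e i).card = k)
    (hsparse : ∀ G ⊆ F, G.Nonempty → (2 * k - 3) * G.card < 2 * (G.biUnion e).card) :
    ∃ C : Fin F.card → ι, Function.Injective C ∧ (∀ i, C i ∈ F) ∧
      ∀ i : Fin F.card,
        k - 2 ≤ ((e (C i)).filter fun v => ∀ j : Fin F.card, j < i → v ∉ e (C j)).card :=
  stmt2_general k F e hcard hsparse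
end

section
/- Fix k ≥ 3. Let F be a finite family of k-ary constraints over a variable type V such that every constraint in F has no implicates of length at most 2 (is 2-extendable). Suppose there is an enumeration C₁, …, C_m of the members of F such that for every i, at most 2 of the variables in the scope of C_i appear in the scopes of C₁, …, C_{i−1}. Then F is satisfiable. -/
/-
Process the constraints in the given order. When `Cᵢ` is reached, the current assignment
satisfies `C₁, …, Cᵢ₋₁`, and `Cᵢ` shares at most two variables with them. By 2-extendability
some assignment satisfies `Cᵢ` and agrees with the current one on those shared variables;
using it on the scope of `Cᵢ` and keeping the old values elsewhere satisfies `C₁, …, Cᵢ`.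
-/

section

open Finset

variable {V : Type*} [DecidableEq V] {k : ℕ}

theorem TwoExtendable.exists_sat_eqOn {c : Constraint V k} (hc : TwoExtendable c)
    (U : Finset V) (hU : (c.scope ∩ U).card ≤ 2) (σ : V → Bool) :
    ∃ τ : V → Bool, (∀ v ∈ U, τ v = σ v) ∧ c.sat τ := by
  obtain ⟨τ₀, hτ₀σ, hτ₀⟩ := hc (c.scope ∩ U) inter_subset_left hU σ
  refine ⟨c.scope.piecewise τ₀ σ, fun v hv => ?_, ?_⟩
  · by_cases hvs : v ∈ c.scope
    · rw [piecewise_eq_of_mem _ _ _ hvs]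
      exact hτ₀σ v (mem_inter.mpr ⟨hvs, hv⟩)
    · exact piecewise_eq_of_notMem _ _ _ hvs
  · refine (c.isLocal _ τ₀ fun v hv => ?_).mpr hτ₀
    exact piecewise_eq_of_mem _ _ _ hv

theorem exists_sat_of_twoExtendable_of_sequential {n : ℕ} (c : Fin n → Constraint V k)
    (hext : ∀ i, TwoExtendable (c i))
    (horder : ∀ i : Fin n,
      ((c i).scope ∩ (univ.filter fun j => j < i).biUnion (fun j => (c j).scope)).card ≤ 2) :
    ∃ σ : V → Bool, ∀ i, (c i).sat σ := by
  suffices hprefix :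
      ∀ m ≤ n, ∃ σ : V → Bool, ∀ i : Fin n, (i : ℕ) < m → (c i).sat σ by
    obtain ⟨σ, hσ⟩ := hprefix n le_rfl
    exact ⟨σ, fun i => hσ i i.isLt⟩
  intro m
  induction m with
  | zero => exact fun _ => ⟨fun _ => true, fun i hi => absurd hi (Nat.not_lt_zero _)⟩
  | succ m ih =>
    intro hm
    obtain ⟨σ, hσ⟩ := ih (Nat.le_of_succ_le hm)
    let i : Fin n := ⟨m, hm⟩
    obtain ⟨τ, hτσ, hτ⟩ := (hext i).exists_sat_eqOn _ (horder i) σ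
    refine ⟨τ, fun j hj => ?_⟩
    rcases Nat.lt_succ_iff_lt_or_eq.mp hj with hlt | heq
    · refine ((c j).isLocal τ σ fun v hv => hτσ v ?_).mpr (hσ j hlt)
      exact subset_biUnion_of_mem (fun j => (c j).scope)
        (mem_filter.mpr ⟨mem_univ j, (hlt : j < i)⟩) hv
    · rwa [show j = i from Fin.ext heq]

end

theorem stmt4_general {V ι : Type*} [DecidableEq V] (k : ℕ)
    (F : Finset ι) (con : ι → Constraint V k)
    (hext : ∀ i ∈ F, TwoExtendable (con i))
    (C : Fin F.card → ι) (hinj : Function.Injective C) (hmem : ∀ i, C i ∈ F)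
    (horder : ∀ i : Fin F.card,
      ((con (C i)).scope ∩
        (Finset.univ.filter fun j : Fin F.card => j < i).biUnion
          (fun j => (con (C j)).scope)).card ≤ 2) :
    ∃ σ : V → Bool, ∀ i ∈ F, (con i).sat σ := by
  obtain ⟨σ, hσ⟩ :=
    exists_sat_of_twoExtendable_of_sequential (con ∘ C) (fun i => hext _ (hmem i)) horder
  have hsurj : Set.SurjOn C (Finset.univ : Finset (Fin F.card)) F :=
    Finset.surjOn_of_injOn_of_card_le C (fun i _ => hmem i) hinj.injOn
      (by rw [Finset.card_univ, Fintype.card_fin])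
  refine ⟨σ, fun i hi => ?_⟩
  obtain ⟨j, -, rfl⟩ := hsurj hi
  exact hσ j

theorem stmt4 {V ι : Type*} [DecidableEq V] (k : ℕ) (hk : 3 ≤ k)
    (F : Finset ι) (con : ι → Constraint V k)
    (hext : ∀ i ∈ F, TwoExtendable (con i))
    (C : Fin F.card → ι) (hinj : Function.Injective C) (hmem : ∀ i, C i ∈ F)
    (horder : ∀ i : Fin F.card,
      ((con (C i)).scope ∩
        (Finset.univ.filter fun j : Fin F.card => j < i).biUnion
          (fun j => (con (C j)).scope)).card ≤ 2) :
    ∃ σ : V → Bool, ∀ i ∈ F, (con i).sat σ :=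
  stmt4_general k F con hext C hinj hmem horder
end

section
/- Fix k ≥ 3. Let Ξ be a finite family of k-ary constraints over a variable type V, each having no implicates of length at most 2 (2-extendable), and let C be a clause (a finite set of literals over V). Suppose Ξ implies C (every assignment satisfying all constraints of Ξ satisfies C) and Ξ is minimal with this property (no proper subfamily of Ξ implies C). Then for every constraint D ∈ Ξ such that at least k−2 of the variables in its scope are private (i.e., appear in the scope of no other constraint of Ξ), at least one private variable of D occurs among the variables of the literals of C. -/
/-- A clause (finite set of literals) is satisfied iff some literal in it is satisfied. -/
def ClauseSat {V : Type*} (σ : V → Bool) (C : Finset (V × Bool)) : Prop :=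
  ∃ l ∈ C, σ l.1 = l.2

/-- A family of constraints implies a clause if every assignment satisfying all
constraints of the family satisfies the clause. -/
def Implies {V ι : Type*} {k : ℕ} (con : ι → Constraint V k) (Ξ : Finset ι)
    (C : Finset (V × Bool)) : Prop :=
  ∀ σ : V → Bool, (∀ i ∈ Ξ, (con i).sat σ) → ClauseSat σ C

theorem stmt5 {V ι : Type*} [DecidableEq V] [DecidableEq ι] (k : ℕ) (hk : 3 ≤ k)
    (Ξ : Finset ι) (con : ι → Constraint V k)
    (hext : ∀ i ∈ Ξ, TwoExtendable (con i))
    (C : Finset (V × Bool))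
    (himp : Implies con Ξ C)
    (hmin : ∀ Ξ' ⊂ Ξ, ¬ Implies con Ξ' C)
    (D : ι) (hD : D ∈ Ξ)
    (hpriv : k - 2 ≤ ((con D).scope.filter
      (fun v => ∀ j ∈ Ξ, j ≠ D → v ∉ (con j).scope)).card) :
    ∃ v ∈ (con D).scope,
      (∀ j ∈ Ξ, j ≠ D → v ∉ (con j).scope) ∧ v ∈ C.image Prod.fst := by
  classical
  by_contra h
  push_neg at h
  set P := (con D).scope.filter (fun v => ∀ j ∈ Ξ, j ≠ D → v ∉ (con j).scope) with hPdef
  have hPsub : P ⊆ (con D).scope := Finset.filter_subset _ _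
  have hmin' := hmin (Ξ.erase D) (Finset.erase_ssubset hD)
  rw [Implies] at hmin'
  push_neg at hmin'
  obtain ⟨σ, hσ, hσC⟩ := hmin'
  have hcard : ((con D).scope \ P).card ≤ 2 := by
    rw [Finset.card_sdiff_of_subset hPsub, (con D).card_scope]
    omega
  obtain ⟨τ, hτ, hDsat⟩ := hext D hD ((con D).scope \ P) Finset.sdiff_subset hcard σ
  set σ' : V → Bool := fun v => if v ∈ P then τ v else σ v with hσ'def
  have hall : ∀ i ∈ Ξ, (con i).sat σ' := by
    intro i hi
    by_cases hiD : i = D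
    · subst hiD
      rw [(con i).isLocal σ' τ]
      · exact hDsat
      · intro v hv
        by_cases hvP : v ∈ P
        · simp [hσ'def, hvP]
        · have : v ∈ (con i).scope \ P := Finset.mem_sdiff.2 ⟨hv, hvP⟩
          simp [hσ'def, hvP, hτ v this]
    · rw [(con i).isLocal σ' σ]
      · exact hσ i (Finset.mem_erase.2 ⟨hiD, hi⟩)
      · intro v hv
        have hvP : v ∉ P := by
          intro hvP
          exact (Finset.mem_filter.1 hvP).2 i hi hiD hv
        simp [hσ'def, hvP]
  have := himp σ' hall
  obtain ⟨l, hl, hval⟩ := this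
  have hlP : l.1 ∉ P := by
    intro hlP
    obtain ⟨hsc, hpr⟩ := Finset.mem_filter.1 hlP
    exact h l.1 hsc hpr (Finset.mem_image.2 ⟨l, hl, rfl⟩)
  apply hσC
  exact ⟨l, hl, by simpa [hσ'def, hlP] using hval⟩
end

section
/- Fix k ≥ 3 and a real ε > 0. Let G be a finite k-uniform hypergraph with m = |G| edges such that (2k−3+ε)·m < 2·|V(G)|. Then the number of edges of G that contain at least k−2 vertices of degree exactly 1 in G is at least (ε/3)·m. -/
theorem stmt6 {ι W : Type*} [DecidableEq W] (k : ℕ) (hk : 3 ≤ k)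
    (ε : ℝ) (hε : 0 < ε)
    (G : Finset ι) (e : ι → Finset W) (hcard : ∀ i ∈ G, (e i).card = k)
    (hsparse : (2 * (k : ℝ) - 3 + ε) * G.card < 2 * (G.biUnion e).card) :
    (ε / 3) * G.card ≤
      ((G.filter fun i =>
        k - 2 ≤ ((e i).filter fun v => (G.filter fun j => v ∈ e j).card = 1).card).card : ℝ) := by
  classical
  -- double counting lemma
  have key : ∀ (P : W → Prop) (inst : DecidablePred P),
      ∑ i ∈ G, ((e i).filter P).card
        = ∑ v ∈ (G.biUnion e).filter P, (G.filter fun j => v ∈ e j).card := by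
    intro P inst
    have h1 : ∀ i ∈ G, ((e i).filter P).card
        = ∑ v ∈ (G.biUnion e).filter P, if v ∈ e i then 1 else 0 := by
      intro i hi
      rw [← Finset.card_filter]
      congr 1
      ext v
      simp only [Finset.mem_filter, Finset.mem_biUnion]
      exact ⟨fun ⟨h1, h2⟩ => ⟨⟨⟨i, hi, h1⟩, h2⟩, h1⟩, fun ⟨⟨_, h2⟩, h1⟩ => ⟨h1, h2⟩⟩
    rw [Finset.sum_congr rfl h1, Finset.sum_comm]
    exact Finset.sum_congr rfl fun v _ => (Finset.card_filter _ _).symm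
  -- total degree count
  have hA : ∑ v ∈ G.biUnion e, (G.filter fun j => v ∈ e j).card = k * G.card := by
    have h := key (fun _ => True) inferInstance
    simp only [Finset.filter_true] at h
    rw [← h, Finset.sum_congr rfl hcard, Finset.sum_const, smul_eq_mul, mul_comm]
  -- every vertex of V has degree ≥ 1
  have hdegpos : ∀ v ∈ G.biUnion e, 1 ≤ (G.filter fun j => v ∈ e j).card := by
    intro v hv
    obtain ⟨i, hi, hvi⟩ := Finset.mem_biUnion.1 hv
    exact Finset.card_pos.2 ⟨i, Finset.mem_filter.2 ⟨hi, hvi⟩⟩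
  -- lower bound on number of degree-1 vertices
  have hB : 2 * (G.biUnion e).card
      ≤ (∑ v ∈ G.biUnion e, (G.filter fun j => v ∈ e j).card)
        + ((G.biUnion e).filter fun v => (G.filter fun j => v ∈ e j).card = 1).card := by
    rw [Finset.card_filter, ← Finset.sum_add_distrib]
    calc 2 * (G.biUnion e).card = ∑ _v ∈ G.biUnion e, 2 := by
          rw [Finset.sum_const, smul_eq_mul, mul_comm]
      _ ≤ _ := Finset.sum_le_sum fun v hv => by
          have h := hdegpos v hv
          split_ifs with h1 <;> omega
  -- counting degree-1 vertices edge by edge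
  have hC : ∑ i ∈ G, ((e i).filter fun v => (G.filter fun j => v ∈ e j).card = 1).card
      = ((G.biUnion e).filter fun v => (G.filter fun j => v ∈ e j).card = 1).card := by
    rw [key _ inferInstance, Finset.card_eq_sum_ones]
    exact Finset.sum_congr rfl fun v hv => (Finset.mem_filter.1 hv).2
  -- notation
  set d1 : ι → ℕ := fun i =>
    ((e i).filter fun v => (G.filter fun j => v ∈ e j).card = 1).card with hd1
  set GD := G.filter fun i => k - 2 ≤ d1 i with hGD
  set BD := G.filter fun i => ¬ (k - 2 ≤ d1 i) with hBD
  have hsplit : GD.card + BD.card = G.card :=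
    Finset.card_filter_add_card_filter_not _
  -- bound on the edge-wise sum, in ℝ
  have hD : (∑ i ∈ G, (d1 i : ℝ))
      ≤ GD.card * (k : ℝ) + BD.card * ((k : ℝ) - 3) := by
    rw [← Finset.sum_filter_add_sum_filter_not G (fun i => k - 2 ≤ d1 i)]
    have hg : ∑ i ∈ GD, (d1 i : ℝ) ≤ GD.card * (k : ℝ) := by
      calc ∑ i ∈ GD, (d1 i : ℝ) ≤ ∑ _i ∈ GD, (k : ℝ) := by
            apply Finset.sum_le_sum
            intro i hi
            have hi' := (Finset.mem_filter.1 hi).1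
            have hle : d1 i ≤ k := by
              calc d1 i ≤ (e i).card := Finset.card_filter_le _ _
                _ = k := hcard i hi'
            exact_mod_cast hle
        _ = GD.card * (k : ℝ) := by rw [Finset.sum_const, nsmul_eq_mul]
    have hb : ∑ i ∈ BD, (d1 i : ℝ) ≤ BD.card * ((k : ℝ) - 3) := by
      calc ∑ i ∈ BD, (d1 i : ℝ) ≤ ∑ _i ∈ BD, ((k : ℝ) - 3) := by
            apply Finset.sum_le_sum
            intro i hi
            have hi' := (Finset.mem_filter.1 hi).2
            have h3 : d1 i + 3 ≤ k := by omega
            have : (d1 i : ℝ) + 3 ≤ (k : ℝ) := by exact_mod_cast h3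
            linarith
        _ = BD.card * ((k : ℝ) - 3) := by rw [Finset.sum_const, nsmul_eq_mul]
    linarith
  -- assemble everything over ℝ
  have hAr : (∑ v ∈ G.biUnion e, ((G.filter fun j => v ∈ e j).card : ℝ))
      = (k : ℝ) * G.card := by exact_mod_cast congrArg (Nat.cast : ℕ → ℝ) hA
  have hBr : 2 * ((G.biUnion e).card : ℝ)
      ≤ (∑ v ∈ G.biUnion e, ((G.filter fun j => v ∈ e j).card : ℝ))
        + (((G.biUnion e).filter fun v =>
            (G.filter fun j => v ∈ e j).card = 1).card : ℝ) := by
    exact_mod_cast hB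
  have hCr : (∑ i ∈ G, (d1 i : ℝ))
      = (((G.biUnion e).filter fun v =>
          (G.filter fun j => v ∈ e j).card = 1).card : ℝ) := by
    exact_mod_cast hC
  have hsplitr : (GD.card : ℝ) + BD.card = G.card := by exact_mod_cast hsplit
  have hfinal : ε * G.card < 3 * GD.card := by nlinarith
  show (ε / 3) * G.card ≤ (GD.card : ℝ)
  linarith
end

section
/- For all integers k ≥ 1 and n with n ≥ 2k, one has 1 − (choose(n−k, k) / choose(n, k)) ≤ k² / (n−k+1), where choose denotes the binomial coefficient and the inequality is between real numbers. -/
open Finset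

lemma weierstrass_aux (s : Finset ℕ) (g : ℕ → ℝ) (h0 : ∀ i ∈ s, 0 ≤ g i)
    (h1 : ∀ i ∈ s, g i ≤ 1) : 1 - ∑ i ∈ s, g i ≤ ∏ i ∈ s, (1 - g i) := by
  induction s using Finset.induction with
  | empty => simp
  | @insert a s ha ih =>
    rw [Finset.sum_insert ha, Finset.prod_insert ha]
    have h0a := h0 a (mem_insert_self a s)
    have h1a := h1 a (mem_insert_self a s)
    have ih' := ih (fun i hi => h0 i (mem_insert_of_mem hi))
      (fun i hi => h1 i (mem_insert_of_mem hi))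
    have hprod : (0:ℝ) ≤ ∏ i ∈ s, (1 - g i) :=
      Finset.prod_nonneg fun i hi => by linarith [h1 i (mem_insert_of_mem hi)]
    have hs : (0:ℝ) ≤ ∑ i ∈ s, g i :=
      Finset.sum_nonneg fun i hi => h0 i (mem_insert_of_mem hi)
    rcases le_or_gt (1 - ∑ i ∈ s, g i) 0 with h | h
    · nlinarith
    · nlinarith

theorem stmt7 (k n : ℕ) (hk : 1 ≤ k) (hn : 2 * k ≤ n) :
    1 - ((n - k).choose k : ℝ) / (n.choose k : ℝ) ≤ (k : ℝ) ^ 2 / ((n : ℝ) - k + 1) := by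
  have hkn : k ≤ n := le_trans (by omega) hn
  have hden : ∀ i ∈ range k, (0:ℝ) < (n:ℝ) - i := by
    intro i hi
    have : i < k := mem_range.mp hi
    have : (i:ℝ) < n := by exact_mod_cast lt_of_lt_of_le this hkn
    linarith
  -- express ratio as product
  have hratio : ((n - k).choose k : ℝ) / (n.choose k : ℝ)
      = ∏ i ∈ range k, (1 - (k:ℝ) / ((n:ℝ) - i)) := by
    have h1 : ((n-k).descFactorial k : ℝ) = (k.factorial : ℝ) * ((n-k).choose k : ℝ) := by
      exact_mod_cast congrArg (Nat.cast : ℕ → ℝ) (Nat.descFactorial_eq_factorial_mul_choose (n-k) k)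
    have h2 : (n.descFactorial k : ℝ) = (k.factorial : ℝ) * (n.choose k : ℝ) := by
      exact_mod_cast congrArg (Nat.cast : ℕ → ℝ) (Nat.descFactorial_eq_factorial_mul_choose n k)
    have hcpos : 0 < n.choose k := Nat.choose_pos hkn
    have hcpos' : (0:ℝ) < (n.choose k : ℝ) := by exact_mod_cast hcpos
    have hfpos : (0:ℝ) < (k.factorial : ℝ) := by exact_mod_cast k.factorial_pos
    have key : ((n - k).choose k : ℝ) / (n.choose k : ℝ)
        = ((n-k).descFactorial k : ℝ) / (n.descFactorial k : ℝ) := by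
      rw [h1, h2, mul_div_mul_left _ _ (ne_of_gt hfpos)]
    rw [key, Nat.descFactorial_eq_prod_range, Nat.descFactorial_eq_prod_range]
    push_cast
    rw [← Finset.prod_div_distrib]
    apply Finset.prod_congr rfl
    intro i hi
    have hik : i < k := mem_range.mp hi
    have hnum : ((n - k - i : ℕ) : ℝ) = (n:ℝ) - k - i := by
      have : k + i ≤ n := by omega
      push_cast [Nat.sub_sub, Nat.cast_sub this]
      ring
    have hden' : ((n - i : ℕ) : ℝ) = (n:ℝ) - i := by
      have : i ≤ n := by omega
      push_cast [Nat.cast_sub this]; ring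
    rw [hnum, hden']
    have hd := hden i hi
    field_simp
    ring
  rw [hratio]
  have hnk1 : (0:ℝ) < (n:ℝ) - k + 1 := by
    have : (k:ℝ) ≤ n := by exact_mod_cast hkn
    linarith
  have hgle : ∀ i ∈ range k, (k:ℝ) / ((n:ℝ) - i) ≤ (k:ℝ) / ((n:ℝ) - k + 1) := by
    intro i hi
    have hik : i < k := mem_range.mp hi
    apply div_le_div_of_nonneg_left _ hnk1
    · have : (i:ℝ) ≤ (k:ℝ) - 1 := by
        have : (i:ℝ) + 1 ≤ k := by exact_mod_cast hik
        linarith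
      linarith
    · exact_mod_cast Nat.zero_le k
  have hg0 : ∀ i ∈ range k, 0 ≤ (k:ℝ) / ((n:ℝ) - i) := fun i hi =>
    div_nonneg (by positivity) (le_of_lt (hden i hi))
  have hg1 : ∀ i ∈ range k, (k:ℝ) / ((n:ℝ) - i) ≤ 1 := by
    intro i hi
    rw [div_le_one (hden i hi)]
    have hik : i < k := mem_range.mp hi
    have : (k:ℝ) + i ≤ n := by exact_mod_cast (by omega : k + i ≤ n)
    linarith [hden i hi]
  have hW := weierstrass_aux (range k) (fun i => (k:ℝ) / ((n:ℝ) - i)) hg0 hg1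
  have hsum : ∑ i ∈ range k, (k:ℝ) / ((n:ℝ) - i) ≤ (k:ℝ)^2 / ((n:ℝ) - k + 1) := by
    calc ∑ i ∈ range k, (k:ℝ) / ((n:ℝ) - i) ≤ ∑ i ∈ range k, (k:ℝ) / ((n:ℝ) - k + 1) :=
          Finset.sum_le_sum hgle
      _ = k * ((k:ℝ) / ((n:ℝ) - k + 1)) := by
          rw [Finset.sum_const, card_range, nsmul_eq_mul]
      _ = (k:ℝ)^2 / ((n:ℝ) - k + 1) := by ring
  linarith
end

section
/- Fix k ≥ 3. Let F be a finite family of k-ary XOR constraints over a variable type V: each constraint i has a scope e(i) ⊆ V with |e(i)| = k and a target b(i) ∈ ZMod 2, and an assignment σ : V → ZMod 2 satisfies constraint i iff Σ_{v ∈ e(i)} σ v = b(i). If F is minimally unsatisfiable, then there exists a nonempty subfamily G ⊆ F with (2k−3)·|G| ≥ 2·|Var(G)|, where Var(G) = ⋃_{i∈G} e(i). -/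
theorem stmt13 {V ι : Type*} [DecidableEq V] (k : ℕ) (hk : 3 ≤ k)
    (F : Finset ι) (e : ι → Finset V) (b : ι → ZMod 2)
    (hcard : ∀ i ∈ F, (e i).card = k)
    (hunsat : ¬ ∃ σ : V → ZMod 2, ∀ i ∈ F, ∑ v ∈ e i, σ v = b i)
    (hmin : ∀ G ⊂ F, ∃ σ : V → ZMod 2, ∀ i ∈ G, ∑ v ∈ e i, σ v = b i) :
    ∃ G ⊆ F, G.Nonempty ∧ 2 * (G.biUnion e).card ≤ (2 * k - 3) * G.card := by
  classical
  have hne : F.Nonempty := by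
    by_contra h
    rw [Finset.not_nonempty_iff_eq_empty] at h
    exact hunsat ⟨0, by simp [h]⟩
  refine ⟨F, subset_rfl, hne, ?_⟩
  -- every variable appears in at least two constraints
  have hdeg : ∀ v ∈ F.biUnion e, 2 ≤ (F.filter fun i => v ∈ e i).card := by
    intro v hv
    by_contra h
    push_neg at h
    obtain ⟨i₀, hi₀F, hvi₀⟩ := Finset.mem_biUnion.mp hv
    have hi₀f : i₀ ∈ F.filter fun i => v ∈ e i := Finset.mem_filter.mpr ⟨hi₀F, hvi₀⟩
    have h1 : (F.filter fun i => v ∈ e i) = {i₀} := by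
      apply Finset.eq_singleton_iff_unique_mem.mpr
      refine ⟨hi₀f, fun j hj => ?_⟩
      by_contra hne'
      have : 2 ≤ (F.filter fun i => v ∈ e i).card := by
        have : ({j, i₀} : Finset ι) ⊆ F.filter fun i => v ∈ e i := by
          intro x hx
          rcases Finset.mem_insert.mp hx with rfl | hx
          · exact hj
          · rw [Finset.mem_singleton.mp hx]; exact hi₀f
        calc 2 = ({j, i₀} : Finset ι).card := by rw [Finset.card_pair hne']
          _ ≤ _ := Finset.card_le_card this
      omega
    have honly : ∀ i ∈ F, i ≠ i₀ → v ∉ e i := by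
      intro i hiF hne' hvi
      exact hne' (Finset.mem_singleton.mp (h1 ▸ Finset.mem_filter.mpr ⟨hiF, hvi⟩))
    obtain ⟨σ, hσ⟩ := hmin (F.erase i₀) (Finset.erase_ssubset hi₀F)
    set S : ZMod 2 := ∑ w ∈ e i₀, σ w with hS
    set σ' : V → ZMod 2 := Function.update σ v (σ v + b i₀ - S) with hσ'
    apply hunsat
    refine ⟨σ', fun i hiF => ?_⟩
    by_cases hi : i = i₀
    · subst hi
      rw [hσ', Finset.sum_update_of_mem hvi₀]
      have h2 : ∑ w ∈ e i \ {v}, σ w = S - σ v := by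
        rw [Finset.sum_eq_sum_sdiff_singleton_add hvi₀ σ] at hS
        linear_combination -hS
      rw [h2]; ring
    · have : ∑ w ∈ e i, σ' w = ∑ w ∈ e i, σ w := by
        apply Finset.sum_congr rfl
        intro w hw
        rw [hσ', Function.update_of_ne]
        rintro rfl
        exact honly i hiF hi hw
      rw [this]
      exact hσ i (Finset.mem_erase.mpr ⟨hi, hiF⟩)
  -- double counting
  have hcount : ∑ v ∈ F.biUnion e, (F.filter fun i => v ∈ e i).card
      = ∑ i ∈ F, (e i).card := by
    simp_rw [Finset.card_filter]
    rw [Finset.sum_comm]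
    apply Finset.sum_congr rfl
    intro i hi
    rw [Finset.sum_ite_mem, Finset.sum_const, smul_eq_mul, mul_one]
    congr 1
    exact Finset.inter_eq_right.mpr (fun v hv => Finset.mem_biUnion.mpr ⟨i, hi, hv⟩)
  have h2V : 2 * (F.biUnion e).card ≤ ∑ i ∈ F, (e i).card := by
    rw [← hcount]
    calc 2 * (F.biUnion e).card = ∑ _v ∈ F.biUnion e, 2 := by
          rw [Finset.sum_const, smul_eq_mul, mul_comm]
      _ ≤ _ := Finset.sum_le_sum hdeg
  have hsum : ∑ i ∈ F, (e i).card = k * F.card := by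
    rw [Finset.sum_congr rfl hcard, Finset.sum_const, smul_eq_mul, mul_comm]
  have : k * F.card ≤ (2 * k - 3) * F.card := by
    apply Nat.mul_le_mul_right
    omega
  omega
end
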